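/- arXiv:2602.00644 — 2 statements merged into one kernel-verified Lean document; each statement's English description precedes it below -/
import Mathlib

section
/- Fix integers h ≥ 2 and n ≥ 1 with n = q·h + r, 0 ≤ r < h. If a partition of an n-element set into blocks of size at most h contains two distinct blocks B_1, B_2 with |B_1| ≤ |B_2| ≤ h − 1, then it does not minimize the number of cross pairs Σ_{i<j} |B_i|·|B_j|; that is, any minimizing partition has at most one block of size strictly less than h. -/
/-!
Moving a single element `x` from the smaller block `B₁` into `B₂` keeps every block of size at
most `h` (as `|B₂| + 1 ≤ h`) and changes the number of pairs inside blocks by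
`C(|B₂|+1, 2) + C(|B₁|-1, 2) - C(|B₂|, 2) - C(|B₁|, 2) = |B₂| - |B₁| + 1 > 0`.
Since the cross pairs are the `C(n, 2)` pairs minus those inside blocks, they strictly decrease.
-/

open Finset

namespace Finpartition

variable {α : Type*} [DecidableEq α] {s B : Finset α} {x : α}

def moveParts (P : Finpartition s) (B : Finset α) (x : α) : Finset (Finset α) :=
  P.parts.image fun C ↦ if C = B then insert x C else C.erase x

lemma supIndep_moveParts (P : Finpartition s) (B : Finset α) (x : α) :
    (P.moveParts B x).SupIndep id := by
  rw [supIndep_iff_pairwiseDisjoint, moveParts, coe_image]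
  rintro _ ⟨C, hC, rfl⟩ _ ⟨D, hD, rfl⟩ hCD
  have hne : C ≠ D := by rintro rfl; exact hCD rfl
  have hdisj := P.disjoint hC hD hne
  simp only [Function.onFun, id]
  split_ifs with hCB hDB hDB
  · exact absurd (hCB.trans hDB.symm) hne
  · exact disjoint_insert_left.2 ⟨notMem_erase _ _, hdisj.mono_right (erase_subset _ _)⟩
  · exact disjoint_insert_right.2 ⟨notMem_erase _ _, hdisj.mono_left (erase_subset _ _)⟩
  · exact hdisj.mono (erase_subset _ _) (erase_subset _ _)

lemma sup_moveParts (P : Finpartition s) (hB : B ∈ P.parts) (hx : x ∈ s) :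
    (P.moveParts B x).sup id = s := by
  refine le_antisymm (Finset.sup_le ?_) fun y hy ↦ ?_
  · simp only [moveParts, mem_image, forall_exists_index, and_imp, forall_apply_eq_imp_iff₂]
    intro C hC
    split_ifs
    · exact insert_subset hx (P.le hC)
    · exact (erase_subset _ _).trans (P.le hC)
  · obtain ⟨C, hC, hyC⟩ := P.exists_mem hy
    rw [mem_sup]
    by_cases hyx : y = x
    · exact ⟨_, mem_image_of_mem _ hB, by simp [hyx]⟩
    · refine ⟨_, mem_image_of_mem _ hC, ?_⟩
      split_ifs <;> simp [hyC, hyx]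

/-- If `x` was alone in its part, that part becomes empty and is dropped by `ofErase`. -/
def moveTo (P : Finpartition s) (hB : B ∈ P.parts) (hx : x ∈ s) : Finpartition s :=
  ofErase (P.moveParts B x) (P.supIndep_moveParts B x) (P.sup_moveParts hB hx)

lemma injOn_moveParts (P : Finpartition s) (B : Finset α) (x : α) :
    Set.InjOn (fun C ↦ if C = B then insert x C else C.erase x) P.parts := by
  intro C hC D hD hCD
  have hxC : x ∈ insert x C := mem_insert_self x C
  have hxD : x ∈ insert x D := mem_insert_self x D
  simp only at hCD
  split_ifs at hCD with hCB hDB hDB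
  · exact hCB.trans hDB.symm
  · exact absurd (hCD ▸ hxC) (notMem_erase x D)
  · exact absurd (hCD ▸ hxD) (notMem_erase x C)
  · obtain hempty | ⟨z, hz⟩ := (C.erase x).eq_empty_or_nonempty
    · have hC' := (erase_eq_empty_iff C x).1 hempty
      have hD' := (erase_eq_empty_iff D x).1 (hCD ▸ hempty)
      rw [hC'.resolve_left (P.ne_empty hC), hD'.resolve_left (P.ne_empty hD)]
    · exact P.eq_of_mem_parts hC hD (mem_of_mem_erase hz) (mem_of_mem_erase (hCD ▸ hz))

lemma eq_insert_or_subset_of_mem_moveTo (P : Finpartition s) (hB : B ∈ P.parts) (hx : x ∈ s)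
    {C : Finset α} (hC : C ∈ (P.moveTo hB hx).parts) : C = insert x B ∨ ∃ D ∈ P.parts, C ⊆ D := by
  simp only [moveTo, ofErase_parts, moveParts, mem_erase, mem_image] at hC
  obtain ⟨-, D, hD, rfl⟩ := hC
  split_ifs with hDB
  · exact .inl (hDB ▸ rfl)
  · exact .inr ⟨D, hD, erase_subset x D⟩

lemma sum_moveTo_parts_add {M : Type*} [AddCommMonoid M] (P : Finpartition s) {B₁ : Finset α}
    (hB₁ : B₁ ∈ P.parts) (hB : B ∈ P.parts) (hxB₁ : x ∈ B₁) (hne : B₁ ≠ B) (hx : x ∈ s)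
    (f : Finset α → M) (hf : f ∅ = 0) :
    ∑ C ∈ (P.moveTo hB hx).parts, f C + (f B₁ + f B) =
      ∑ C ∈ P.parts, f C + (f (B₁.erase x) + f (insert x B)) := by
  have hB' : B ∈ P.parts.erase B₁ := mem_erase.2 ⟨hne.symm, hB⟩
  have hfix : ∀ C ∈ (P.parts.erase B₁).erase B,
      f (if C = B then insert x C else C.erase x) = f C := by
    intro C hC
    obtain ⟨hCB, hCB₁, hC⟩ : C ≠ B ∧ C ≠ B₁ ∧ C ∈ P.parts := by simpa using hC
    have hxC : x ∉ C := fun hxC ↦ hCB₁ (P.eq_of_mem_parts hC hB₁ hxC hxB₁)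
    rw [if_neg hCB, erase_eq_of_notMem hxC]
  rw [moveTo, ofErase_parts, bot_eq_empty, sum_erase _ hf, moveParts,
    sum_image (P.injOn_moveParts B x), ← add_sum_erase _ _ hB₁, ← add_sum_erase _ _ hB',
    ← add_sum_erase _ _ hB₁, ← add_sum_erase _ _ hB', sum_congr rfl hfix, if_neg hne, if_pos rfl]
  abel

end Finpartition

namespace Nat

lemma choose_two_add_choose_two_lt {a b : ℕ} (ha : 1 ≤ a) (hab : a ≤ b) :
    a.choose 2 + b.choose 2 < (a - 1).choose 2 + (b + 1).choose 2 := by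
  obtain ⟨a, rfl⟩ : ∃ a', a = a' + 1 := ⟨a - 1, by omega⟩
  have hsucc (m : ℕ) : (m + 1).choose 2 = m + m.choose 2 := by
    rw [choose_succ_succ', choose_one_right]
  rw [Nat.add_sub_cancel, hsucc, hsucc]
  omega

lemma choose_two_add (m n : ℕ) : (m + n).choose 2 = m.choose 2 + n.choose 2 + m * n := by
  induction n with
  | zero => simp
  | succ n ih =>
    rw [← add_assoc, choose_succ_succ, choose_succ_succ n, ih, choose_one_right, choose_one_right]
    ring

lemma sum_choose_two_le {ι : Type*} (t : Finset ι) (f : ι → ℕ) :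
    ∑ i ∈ t, (f i).choose 2 ≤ (∑ i ∈ t, f i).choose 2 := by
  induction t using Finset.cons_induction with
  | empty => simp
  | cons a t ha ih =>
    rw [sum_cons, sum_cons, choose_two_add]
    omega

end Nat

theorem stmt7_general {α : Type*} [DecidableEq α] (s : Finset α) (n h : ℕ)
    (hcard : s.card = n)
    (P : Finpartition s) (hP : ∀ B ∈ P.parts, B.card ≤ h)
    (B1 B2 : Finset α) (hB1 : B1 ∈ P.parts) (hB2 : B2 ∈ P.parts) (hne : B1 ≠ B2)
    (h12 : B1.card ≤ B2.card) (h2h : B2.card ≤ h - 1) :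
    ∃ P' : Finpartition s, (∀ B ∈ P'.parts, B.card ≤ h) ∧
      n.choose 2 - ∑ B ∈ P'.parts, B.card.choose 2 <
        n.choose 2 - ∑ B ∈ P.parts, B.card.choose 2 := by
  obtain ⟨x, hxB1⟩ := P.nonempty_of_mem_parts hB1
  have hxB2 : x ∉ B2 := disjoint_left.1 (P.disjoint hB1 hB2 hne) hxB1
  have hB1pos : 0 < #B1 := card_pos.2 ⟨x, hxB1⟩
  set P' := P.moveTo hB2 (P.le hB1 hxB1)
  refine ⟨P', fun C hC ↦ ?_, ?_⟩
  · obtain rfl | ⟨D, hD, hCD⟩ := P.eq_insert_or_subset_of_mem_moveTo hB2 _ hC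
    · rw [card_insert_of_notMem hxB2]
      omega
    · exact (card_le_card hCD).trans (hP D hD)
  · have hsum : ∑ C ∈ P'.parts, (#C).choose 2 + ((#B1).choose 2 + (#B2).choose 2) =
        ∑ C ∈ P.parts, (#C).choose 2 + ((#B1 - 1).choose 2 + (#B2 + 1).choose 2) := by
      simpa only [card_erase_of_mem hxB1, card_insert_of_notMem hxB2] using
        P.sum_moveTo_parts_add hB1 hB2 hxB1 hne _ (fun C ↦ (#C).choose 2) rfl
    have hlt := Nat.choose_two_add_choose_two_lt hB1pos h12
    have hle : ∑ C ∈ P'.parts, (#C).choose 2 ≤ n.choose 2 := by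
      simpa only [P'.sum_card_parts, hcard] using Nat.sum_choose_two_le P'.parts card
    omega

theorem stmt7 {α : Type*} [DecidableEq α] (s : Finset α) (n h q r : ℕ)
    (hcard : s.card = n) (hh : 2 ≤ h) (hn : 1 ≤ n) (hqr : n = q * h + r) (hr : r < h)
    (P : Finpartition s) (hP : ∀ B ∈ P.parts, B.card ≤ h)
    (B1 B2 : Finset α) (hB1 : B1 ∈ P.parts) (hB2 : B2 ∈ P.parts) (hne : B1 ≠ B2)
    (h12 : B1.card ≤ B2.card) (h2h : B2.card ≤ h - 1) :
    ∃ P' : Finpartition s, (∀ B ∈ P'.parts, B.card ≤ h) ∧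
      n.choose 2 - ∑ B ∈ P'.parts, B.card.choose 2 <
        n.choose 2 - ∑ B ∈ P.parts, B.card.choose 2 :=
  stmt7_general s n h hcard P hP B1 B2 hB1 hB2 hne h12 h2h
end

section
/- Let G be a finite connected graph with more than h vertices, and suppose F ⊆ E(G) is such that every connected component of G \ F has at most h vertices. Then there exists a vertex set A with ⌈h/2⌉ ≤ |A| ≤ h such that every edge of G with exactly one endpoint in A belongs to F; in particular, the number of edges of G between A and V(G) \ A is at most |F|. -/
/-!
Take for `A` a union of components of `G \ F`; then every edge leaving `A` lies in `F`. The
components have sizes at most `h` summing to `|V| > h`, so it suffices to pick a subfamily whose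
total lies in `[⌈h/2⌉, h]`: either one component already has size at least `⌈h/2⌉`, or adding
components one at a time, each smaller than `⌈h/2⌉`, first reaches `⌈h/2⌉` at a total of at
most `h`.
-/

open Finset

theorem Finset.exists_subset_sum_mem_Icc {ι : Type*} (s : Finset ι) (f : ι → ℕ) {m h : ℕ}
    (hmh : 2 * m ≤ h + 1) (hf : ∀ i ∈ s, f i ≤ h) (hs : m ≤ ∑ i ∈ s, f i) :
    ∃ t ⊆ s, m ≤ ∑ i ∈ t, f i ∧ ∑ i ∈ t, f i ≤ h := by
  classical
  induction s using Finset.induction_on with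
  | empty => exact ⟨∅, subset_rfl, hs, by simp⟩
  | insert a s ha ih =>
    rw [sum_insert ha] at hs
    by_cases hsm : m ≤ ∑ i ∈ s, f i
    · obtain ⟨t, hts, ht⟩ := ih (fun i hi => hf i (mem_insert_of_mem hi)) hsm
      exact ⟨t, hts.trans (subset_insert a s), ht⟩
    by_cases hsh : f a + ∑ i ∈ s, f i ≤ h
    · exact ⟨insert a s, subset_rfl, by rwa [sum_insert ha], by rwa [sum_insert ha]⟩
    · -- `s` falls short of `m` while `insert a s` overshoots `h`, so `f a` alone is at least `m`
      refine ⟨{a}, by simp, ?_, by simpa using hf a (mem_insert_self a s)⟩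
      rw [sum_singleton]
      omega

namespace SimpleGraph

variable {V : Type*}

theorem ncard_setOf_connectedComponentMk_mem [Fintype V] (H : SimpleGraph V)
    (T : Finset H.ConnectedComponent) :
    {v | H.connectedComponentMk v ∈ T}.ncard = ∑ c ∈ T, c.supp.ncard := by
  classical
  rw [← coe_filter_univ, Set.ncard_coe_finset,
    card_eq_sum_card_fiberwise (f := H.connectedComponentMk) (t := T)
    fun v hv => by simpa using hv]
  refine sum_congr rfl fun c hc => ?_
  rw [← Set.ncard_coe_finset]
  congr 1
  ext v
  simp +contextual [ConnectedComponent.mem_supp_iff, hc]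

theorem sum_ncard_supp_connectedComponent [Fintype V] (H : SimpleGraph V)
    [Fintype H.ConnectedComponent] :
    ∑ c : H.ConnectedComponent, c.supp.ncard = Fintype.card V := by
  simpa [Set.ncard_univ] using (H.ncard_setOf_connectedComponentMk_mem univ).symm

theorem mem_of_adj_of_connectedComponentMk_deleteEdges_mem {G : SimpleGraph V}
    {F : Set (Sym2 V)} {T : Set (G.deleteEdges F).ConnectedComponent} {u v : V}
    (hadj : G.Adj u v) (hu : (G.deleteEdges F).connectedComponentMk u ∈ T)
    (hv : (G.deleteEdges F).connectedComponentMk v ∉ T) : s(u, v) ∈ F := by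
  by_contra huv
  have hreach : (G.deleteEdges F).Reachable u v := (deleteEdges_adj.mpr ⟨hadj, huv⟩).reachable
  exact hv (ConnectedComponent.sound hreach ▸ hu)

end SimpleGraph

theorem stmt10_general {V : Type*} [Fintype V] (G : SimpleGraph V) (h : ℕ)
    (hbig : h < Fintype.card V) (F : Set (Sym2 V))
    (hF : ∀ v, ((G.deleteEdges F).connectedComponentMk v).supp.ncard ≤ h) :
    ∃ A : Set V, (h + 1) / 2 ≤ A.ncard ∧ A.ncard ≤ h ∧
      (∀ u v, G.Adj u v → u ∈ A → v ∉ A → s(u, v) ∈ F) ∧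
      {e ∈ G.edgeSet | ∃ u v, e = s(u, v) ∧ u ∈ A ∧ v ∉ A}.ncard ≤ F.ncard := by
  classical
  set H := G.deleteEdges F
  obtain ⟨T, -, hT⟩ := (univ : Finset H.ConnectedComponent).exists_subset_sum_mem_Icc
    (fun c => c.supp.ncard) (m := (h + 1) / 2) (by omega) (fun c _ => c.ind hF)
    (by rw [H.sum_ncard_supp_connectedComponent]; omega)
  set A : Set V := {v | H.connectedComponentMk v ∈ T}
  have hcross : ∀ u v, G.Adj u v → u ∈ A → v ∉ A → s(u, v) ∈ F :=
    fun _ _ hadj hu hv =>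
      SimpleGraph.mem_of_adj_of_connectedComponentMk_deleteEdges_mem (T := ↑T) hadj hu hv
  refine ⟨A, ?_, ?_, hcross, Set.ncard_le_ncard ?_ F.toFinite⟩
  · rw [H.ncard_setOf_connectedComponentMk_mem]; exact hT.1
  · rw [H.ncard_setOf_connectedComponentMk_mem]; exact hT.2
  · rintro e ⟨he, u, v, rfl, hu, hv⟩
    exact hcross u v he hu hv

theorem stmt10 {V : Type*} [Fintype V] (G : SimpleGraph V) (h : ℕ) (hh : 1 ≤ h)
    (hconn : G.Connected) (hbig : h < Fintype.card V) (F : Set (Sym2 V))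
    (hF : ∀ v, ((G.deleteEdges F).connectedComponentMk v).supp.ncard ≤ h) :
    ∃ A : Set V, (h + 1) / 2 ≤ A.ncard ∧ A.ncard ≤ h ∧
      (∀ u v, G.Adj u v → u ∈ A → v ∉ A → s(u, v) ∈ F) ∧
      {e ∈ G.edgeSet | ∃ u v, e = s(u, v) ∧ u ∈ A ∧ v ∉ A}.ncard ≤ F.ncard :=
  stmt10_general G h hbig F hF
end
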